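/- (Sufficiency under injectivity of the extended adjoint) Assume: (a) there exists C > 0 with ‖A1* h4‖ ≤ C ‖B1* h4‖ for all h4 ∈ H4; (b) the map (h4, h5) ↦ B1* h4 + B2* h5 from H4 × H5 to H2 is injective (i.e. B1* h4 + B2* h5 = 0 implies h4 = 0 and h5 = 0); and (c) for every h5 ∈ H5, if B2* h5 lies in the closure of range(B1*) then h5 = 0 (equivalently: if there is a sequence (y_n) in H4 with B1* y_n → B2* h5 in H2, then h5 = 0). Then for every h1 ∈ H1 and every ε > 0 there exists h2 ∈ H2 such that A1 h1 = B1 h2 and ‖A2 h1 − B2 h2‖ ≤ ε. -/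

import Mathlib

/-!
Write `†` for the Hilbert adjoint. By Hahn–Banach, the bound `‖A1† x‖ ≤ C ‖B1† x‖` makes
`B1† x ↦ ⟪A1 h1, x⟫` a bounded functional on `range B1†`; extending it and representing it by
Riesz gives `z` with `B1 z = A1 h1`. Since `(ker B1)ᗮ` is the closure of `range B1†`, hypothesis
(c) says exactly that `B2 (ker B1)` has trivial orthogonal complement, i.e. is dense in `H5`;
correcting `z` by some `k ∈ ker B1` then brings `B2 (z + k)` within `ε` of `A2 h1`.
-/

open ContinuousLinearMap
open scoped InnerProductSpace

section HahnBanach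

variable {𝕜 E F : Type*} [RCLike 𝕜] [NormedAddCommGroup E] [NormedSpace 𝕜 E]
  [AddCommGroup F] [Module 𝕜 F]

theorem LinearMap.exists_strongDual_comp_eq_of_norm_le (T : F →ₗ[𝕜] E) (g : F →ₗ[𝕜] 𝕜) (c : ℝ)
    (h : ∀ x, ‖g x‖ ≤ c * ‖T x‖) : ∃ G : StrongDual 𝕜 E, ∀ x, G (T x) = g x := by
  have hker : ker T ≤ ker g := fun x hx => by
    simpa [mem_ker.mp hx] using h x
  let f : range T →ₗ[𝕜] 𝕜 := (ker T).liftQ g hker ∘ₗ T.quotKerEquivRange.symm.toLinearMap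
  have hf : ∀ x, f ⟨T x, mem_range_self T x⟩ = g x := fun x => by
    simp [f, T.quotKerEquivRange_symm_apply_image]
  have hfc : ∀ s : range T, ‖f s‖ ≤ c * ‖s‖ := by
    rintro ⟨_, x, rfl⟩
    rw [hf]
    exact h x
  obtain ⟨G, hG, -⟩ := exists_extension_norm_eq (range T) (f.mkContinuous c hfc)
  exact ⟨G, fun x => (hG ⟨T x, mem_range_self T x⟩).trans (hf x)⟩

end HahnBanach

namespace ContinuousLinearMap

variable {𝕜 E F G : Type*} [RCLike 𝕜]
  [NormedAddCommGroup E] [InnerProductSpace 𝕜 E] [CompleteSpace E]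
  [NormedAddCommGroup F] [InnerProductSpace 𝕜 F] [CompleteSpace F]
  [NormedAddCommGroup G] [InnerProductSpace 𝕜 G] [CompleteSpace G]

theorem mem_range_of_norm_inner_le (T : E →L[𝕜] F) (y : F) (c : ℝ)
    (h : ∀ x, ‖⟪y, x⟫_𝕜‖ ≤ c * ‖adjoint T x‖) : y ∈ T.range := by
  obtain ⟨φ, hφ⟩ :=
    (adjoint T : F →ₗ[𝕜] E).exists_strongDual_comp_eq_of_norm_le (innerₛₗ 𝕜 y) c h
  refine ⟨(InnerProductSpace.toDual 𝕜 E).symm φ, ext_inner_right 𝕜 fun x => ?_⟩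
  rw [coe_coe, ← adjoint_inner_right, InnerProductSpace.toDual_symm_apply]
  exact hφ x

theorem dense_map_ker (B : E →L[𝕜] F) (T : E →L[𝕜] G)
    (h : ∀ y, adjoint T y ∈ closure (Set.range (adjoint B)) → y = 0) :
    Dense (B.ker.map (T : E →ₗ[𝕜] G) : Set G) := by
  rw [Submodule.dense_iff_topologicalClosure_eq_top, Submodule.topologicalClosure_eq_top_iff,
    Submodule.eq_bot_iff]
  intro y hy
  apply h
  have hTy : adjoint T y ∈ B.kerᗮ := fun k hk => by
    rw [adjoint_inner_right]
    exact hy (T k) (Submodule.mem_map_of_mem hk)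
  rwa [orthogonal_ker, ← SetLike.mem_coe, Submodule.topologicalClosure_coe,
    LinearMap.coe_range] at hTy

end ContinuousLinearMap

theorem sufficiency_under_injectivity_general
    {H1 H2 H4 H5 : Type*}
    [NormedAddCommGroup H1] [InnerProductSpace ℝ H1] [CompleteSpace H1]
    [NormedAddCommGroup H2] [InnerProductSpace ℝ H2] [CompleteSpace H2]
    [NormedAddCommGroup H4] [InnerProductSpace ℝ H4] [CompleteSpace H4]
    [NormedAddCommGroup H5] [InnerProductSpace ℝ H5] [CompleteSpace H5]
    (A1 : H1 →L[ℝ] H4) (A2 : H1 →L[ℝ] H5)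
    (B1 : H2 →L[ℝ] H4) (B2 : H2 →L[ℝ] H5)
    (ha : ∃ C : ℝ, 0 < C ∧ ∀ h4 : H4, ‖adjoint A1 h4‖ ≤ C * ‖adjoint B1 h4‖)
    (hc : ∀ h5 : H5, adjoint B2 h5 ∈ closure (Set.range (adjoint B1)) → h5 = 0) :
    ∀ h1 : H1, ∀ ε : ℝ, 0 < ε →
      ∃ h2 : H2, A1 h1 = B1 h2 ∧ ‖A2 h1 - B2 h2‖ ≤ ε := by
  intro h1 ε hε
  obtain ⟨C, -, hC⟩ := ha
  have hbound : ∀ x, ‖⟪A1 h1, x⟫_ℝ‖ ≤ ‖h1‖ * C * ‖adjoint B1 x‖ := fun x =>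
    calc ‖⟪A1 h1, x⟫_ℝ‖ = ‖⟪h1, adjoint A1 x⟫_ℝ‖ := by rw [adjoint_inner_right]
      _ ≤ ‖h1‖ * ‖adjoint A1 x‖ := norm_inner_le_norm _ _
      _ ≤ ‖h1‖ * (C * ‖adjoint B1 x‖) := by gcongr; exact hC x
      _ = ‖h1‖ * C * ‖adjoint B1 x‖ := by ring
  obtain ⟨z, hz : B1 z = A1 h1⟩ := B1.mem_range_of_norm_inner_le _ _ hbound
  obtain ⟨_, ⟨k, hk : B1 k = 0, rfl⟩, hdist⟩ :=
    (B1.dense_map_ker B2 hc).exists_dist_lt (A2 h1 - B2 z) hε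
  refine ⟨z + k, by rw [map_add, hz, hk, add_zero], ?_⟩
  rw [map_add, sub_add_eq_sub_sub, ← dist_eq_norm]
  exact hdist.le

/-- Sufficiency under injectivity of the (extended) adjoint `B*`. -/
theorem sufficiency_under_injectivity
    {H1 H2 H4 H5 : Type*}
    [NormedAddCommGroup H1] [InnerProductSpace ℝ H1] [CompleteSpace H1]
    [NormedAddCommGroup H2] [InnerProductSpace ℝ H2] [CompleteSpace H2]
    [NormedAddCommGroup H4] [InnerProductSpace ℝ H4] [CompleteSpace H4]
    [NormedAddCommGroup H5] [InnerProductSpace ℝ H5] [CompleteSpace H5]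
    (A1 : H1 →L[ℝ] H4) (A2 : H1 →L[ℝ] H5)
    (B1 : H2 →L[ℝ] H4) (B2 : H2 →L[ℝ] H5)
    (ha : ∃ C : ℝ, 0 < C ∧ ∀ h4 : H4, ‖adjoint A1 h4‖ ≤ C * ‖adjoint B1 h4‖)
    (hb : ∀ (h4 : H4) (h5 : H5), adjoint B1 h4 + adjoint B2 h5 = 0 →
      h4 = 0 ∧ h5 = 0)
    (hc : ∀ h5 : H5, adjoint B2 h5 ∈ closure (Set.range (adjoint B1)) → h5 = 0) :
    ∀ h1 : H1, ∀ ε : ℝ, 0 < ε →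
      ∃ h2 : H2, A1 h1 = B1 h2 ∧ ‖A2 h1 - B2 h2‖ ≤ ε :=
  sufficiency_under_injectivity_general A1 A2 B1 B2 ha hc
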